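/- With A = A_{n,m} and the G_a-action z ↦ z + t y_1 fixing the x_i and y_j, the invariant ring A^{G_a} equals the k-algebra generated by the monomials x_1^{i_1}⋯x_n^{i_n} y_1^{j_1}⋯y_m^{j_m} with j_1+⋯+j_m > 0; in particular A^{G_a} is not a finitely generated k-algebra. -/

import Mathlib

open MvPolynomial

/-- The variables of `B_{n,m} = k[x_1,…,x_n,y_1,…,y_m,z]`. -/
abbrev BonnetVars (n m : ℕ) := Fin n ⊕ Fin m ⊕ Unit

variable (k : Type*) [Field k] (n m : ℕ)

/-- The variable `x_i`. -/
noncomputable def Xv (i : Fin n) : MvPolynomial (BonnetVars n m) k := X (Sum.inl i)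
/-- The variable `y_j`. -/
noncomputable def Yv (j : Fin m) : MvPolynomial (BonnetVars n m) k := X (Sum.inr (Sum.inl j))
/-- The variable `z`. -/
noncomputable def Zv : MvPolynomial (BonnetVars n m) k := X (Sum.inr (Sum.inr ()))

/-- The generators of the subalgebra `A_{n,m}`: the `y_j`, `z`, the polynomials
`x_i^2 + x_i z` and `x_i^3 + x_i^2 z`, and the monomials `x_1^{i_1}⋯x_n^{i_n} y_j`
with all `i_k ≤ 1`. -/
noncomputable def AnmGens : Set (MvPolynomial (BonnetVars n m) k) :=
  Set.range (Yv k n m) ∪ {Zv k n m}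
    ∪ Set.range (fun i => Xv k n m i ^ 2 + Xv k n m i * Zv k n m)
    ∪ Set.range (fun i => Xv k n m i ^ 3 + Xv k n m i ^ 2 * Zv k n m)
    ∪ {p | ∃ (s : Finset (Fin n)) (j : Fin m), p = (∏ i ∈ s, Xv k n m i) * Yv k n m j}

/-- The subalgebra `A_{n,m}` of `B_{n,m}`. -/
noncomputable def Anm : Subalgebra k (MvPolynomial (BonnetVars n m) k) :=
  Algebra.adjoin k (AnmGens k n m)

/-- The set of monomials `x_1^{i_1}⋯x_n^{i_n} y_1^{j_1}⋯y_m^{j_m}` with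
`j_1 + ⋯ + j_m > 0`. -/
noncomputable def MonoSet : Set (MvPolynomial (BonnetVars n m) k) :=
  {p | ∃ (iv : Fin n → ℕ) (jv : Fin m → ℕ), 0 < ∑ j, jv j ∧
    p = (∏ i, Xv k n m i ^ iv i) * ∏ j, Yv k n m j ^ jv j}

/-- The `G_a`-action `φ_t` on `B_{n,m}`: `x_i ↦ x_i`, `y_j ↦ y_j`,
`z ↦ z + t y_1` (assuming `m ≥ 1`). -/
noncomputable def phiGa (hm : 0 < m) (t : k) :
    MvPolynomial (BonnetVars n m) k →ₐ[k] MvPolynomial (BonnetVars n m) k :=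
  MvPolynomial.aeval (fun w => match w with
    | Sum.inl i => Xv k n m i
    | Sum.inr (Sum.inl j) => Yv k n m j
    | Sum.inr (Sum.inr _) => Zv k n m + MvPolynomial.C t * Yv k n m ⟨0, hm⟩)

section BonnetAux

open Finsupp



/-- The `z` variable index. -/
abbrev bWZ : BonnetVars n m := Sum.inr (Sum.inr ())
/-- The `y j` variable index. -/
abbrev bWY (j : Fin m) : BonnetVars n m := Sum.inr (Sum.inl j)

/-- Build a finsupp exponent vector from a function. -/
noncomputable def Dfin (u : BonnetVars n m → ℕ) : BonnetVars n m →₀ ℕ :=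
  Finsupp.equivFunOnFinite.symm u

@[simp] lemma Dfin_apply (u : BonnetVars n m → ℕ) (w : BonnetVars n m) :
    Dfin n m u w = u w := rfl

lemma eq_Dfin (d : BonnetVars n m →₀ ℕ) : d = Dfin n m (fun w => d w) := by
  ext w; simp

lemma monomial_Dfin (u : BonnetVars n m → ℕ) :
    (monomial (Dfin n m u) (1 : k)) =
      (∏ i, Xv k n m i ^ u (Sum.inl i)) * (∏ j, Yv k n m j ^ u (Sum.inr (Sum.inl j)))
        * Zv k n m ^ u (Sum.inr (Sum.inr ())) := by
  rw [monomial_eq, Finsupp.prod_fintype _ _ (fun i => pow_zero _)]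
  simp only [Dfin_apply, C_1, one_mul]
  rw [Fintype.prod_sum_type, Fintype.prod_sum_type]
  simp only [Finset.univ_unique, Finset.prod_singleton]
  simp [Xv, Yv, Zv, mul_assoc]

/-- helper: support of a product -/
lemma mem_of_support_mul {p q : MvPolynomial (BonnetVars n m) k} {d : BonnetVars n m →₀ ℕ}
    (hd : d ∈ (p * q).support) :
    ∃ d₁ ∈ p.support, ∃ d₂ ∈ q.support, d₁ + d₂ = d := by
  classical
  rw [MvPolynomial.mem_support_iff, coeff_mul] at hd
  obtain ⟨x, hmem, hne⟩ := Finset.exists_ne_zero_of_sum_ne_zero hd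
  exact ⟨x.1, MvPolynomial.mem_support_iff.2 (left_ne_zero_of_mul hne),
    x.2, MvPolynomial.mem_support_iff.2 (right_ne_zero_of_mul hne), Finset.HasAntidiagonal.mem_antidiagonal.1 hmem⟩

/-- A subalgebra defined by a condition on supports. -/
noncomputable def suppSub (P : (BonnetVars n m →₀ ℕ) → Prop) (h0 : P 0)
    (hadd : ∀ a b, P a → P b → P (a + b)) :
    Subalgebra k (MvPolynomial (BonnetVars n m) k) where
  carrier := {p | ∀ d ∈ p.support, P d}
  mul_mem' := by
    intro p q hp hq d hd
    obtain ⟨d₁, h₁, d₂, h₂, rfl⟩ := mem_of_support_mul k n m hd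
    exact hadd _ _ (hp _ h₁) (hq _ h₂)
  one_mem' := by
    intro d hd
    classical
    rw [MvPolynomial.mem_support_iff, coeff_one] at hd
    obtain rfl : (0 : BonnetVars n m →₀ ℕ) = d := by by_contra h; simp [h] at hd
    exact h0
  add_mem' := by
    classical
    intro p q hp hq d hd
    rcases Finset.mem_union.1 (MvPolynomial.support_add hd) with h | h
    exacts [hp _ h, hq _ h]
  zero_mem' := by simp
  algebraMap_mem' := by
    intro r d hd
    classical
    rw [MvPolynomial.mem_support_iff, algebraMap_eq, coeff_C] at hd
    obtain rfl : (0 : BonnetVars n m →₀ ℕ) = d := by by_contra h; simp [h] at hd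
    exact h0

lemma mem_suppSub {P h0 hadd} {p : MvPolynomial (BonnetVars n m) k} :
    p ∈ suppSub k n m P h0 hadd ↔ ∀ d ∈ p.support, P d := Iff.rfl

/-- Exponents allowed for invariants: z-free, and either zero or containing a `y`. -/
def GoodExp (d : BonnetVars n m →₀ ℕ) : Prop :=
  d (bWZ n m) = 0 ∧ (d = 0 ∨ ∃ j, d (bWY n m j) ≠ 0)

lemma GoodExp.zero : GoodExp n m 0 := ⟨rfl, Or.inl rfl⟩

lemma GoodExp.add : ∀ a b, GoodExp n m a → GoodExp n m b → GoodExp n m (a + b) := by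
  rintro a b ⟨za, ha⟩ ⟨zb, hb⟩
  refine ⟨by simp [Finsupp.add_apply, za, zb], ?_⟩
  rcases ha with rfl | ⟨j, hj⟩
  · simpa using hb
  · exact Or.inr ⟨j, by simp [Finsupp.add_apply]; omega⟩

noncomputable def Vsub : Subalgebra k (MvPolynomial (BonnetVars n m) k) :=
  suppSub k n m (GoodExp n m) (GoodExp.zero n m) (GoodExp.add n m)

lemma prod_form_eq_monomial (iv : Fin n → ℕ) (jv : Fin m → ℕ) :
    (∏ i, Xv k n m i ^ iv i) * ∏ j, Yv k n m j ^ jv j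
      = monomial (Dfin n m (Sum.elim iv (Sum.elim jv fun _ => 0))) 1 := by
  rw [monomial_Dfin]
  simp

lemma adjoin_MonoSet_le_Vsub : Algebra.adjoin k (MonoSet k n m) ≤ Vsub k n m := by
  apply Algebra.adjoin_le
  rintro p ⟨iv, jv, hpos, rfl⟩
  rw [prod_form_eq_monomial]
  intro d hd
  classical
  rw [support_monomial, if_neg one_ne_zero, Finset.mem_singleton] at hd
  subst hd
  refine ⟨rfl, Or.inr ?_⟩
  by_contra hy
  push_neg at hy
  have : ∑ j, jv j = 0 := Finset.sum_eq_zero (fun j _ => by simpa using hy j)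
  omega

lemma mem_adjoin_of_good {p : MvPolynomial (BonnetVars n m) k}
    (h : ∀ d ∈ p.support, GoodExp n m d) : p ∈ Algebra.adjoin k (MonoSet k n m) := by
  rw [← support_sum_monomial_coeff p]
  refine Subalgebra.sum_mem _ (fun d hd => ?_)
  obtain ⟨hz, h0 | ⟨j, hj⟩⟩ := h d hd
  · rw [h0, monomial_zero', ← algebraMap_eq]
    exact Subalgebra.algebraMap_mem _ _
  · have h1 : (monomial d (coeff d p)) = (coeff d p) • monomial d 1 := by
      rw [smul_monomial, smul_eq_mul, mul_one]
    rw [h1]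
    refine Subalgebra.smul_mem _ (Algebra.subset_adjoin ?_) _
    refine ⟨fun i => d (Sum.inl i), fun j' => d (bWY n m j'), ?_, ?_⟩
    · have h2 := Finset.single_le_sum (f := fun j' => d (bWY n m j')) (fun _ _ => Nat.zero_le _)
        (Finset.mem_univ j)
      exact lt_of_lt_of_le (Nat.pos_of_ne_zero hj) h2
    · have hD : Dfin n m (Sum.elim (fun i => d (Sum.inl i))
          (Sum.elim (fun j' => d (bWY n m j')) fun _ => 0)) = d := by
        ext w
        rcases w with i | j' | u
        · simp
        · simp
        · simp [hz.symm]
      rw [prod_form_eq_monomial, hD]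


lemma mem_Anm_of_gen {q : MvPolynomial (BonnetVars n m) k} (h : q ∈ AnmGens k n m) :
    q ∈ Anm k n m := Algebra.subset_adjoin h

lemma xpow_mul_y_mem (j : Fin m) (N : ℕ) : ∀ (iv : Fin n → ℕ), (∑ i, iv i) = N →
    (∏ i, Xv k n m i ^ iv i) * Yv k n m j ∈ Anm k n m := by
  classical
  induction N using Nat.strong_induction_on with
  | _ N IH =>
    intro iv hsum
    by_cases hle : ∀ i, iv i ≤ 1
    · have h1 : (∏ i, Xv k n m i ^ iv i)
          = ∏ i ∈ Finset.univ.filter (fun i => iv i = 1), Xv k n m i := by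
        rw [← Finset.prod_filter_mul_prod_filter_not Finset.univ (fun i => iv i = 1)]
        have h2 : ∏ i ∈ Finset.univ.filter (fun i => ¬ iv i = 1), Xv k n m i ^ iv i = 1 := by
          refine Finset.prod_eq_one (fun i hi => ?_)
          rw [Finset.mem_filter] at hi
          have : iv i = 0 := by have := hle i; omega
          rw [this, pow_zero]
        rw [h2, mul_one]
        exact Finset.prod_congr rfl (fun i hi => by
          rw [Finset.mem_filter] at hi; rw [hi.2, pow_one])
      rw [h1]
      exact Algebra.subset_adjoin (Or.inr ⟨_, j, rfl⟩)
    · push_neg at hle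
      obtain ⟨i₀, hi₀'⟩ := hle
      have hi₀ : 2 ≤ iv i₀ := by omega
      set g := iv i₀ - 2 with hg
      have hiv : iv i₀ = g + 2 := by omega
      have hup : ∀ gg : ℕ, ∑ i, (Function.update iv i₀ gg) i
          = gg + ∑ i ∈ Finset.univ.erase i₀, iv i := by
        intro gg
        rw [Finset.sum_update_of_mem (Finset.mem_univ _)]
        congr 1
        · refine Finset.sum_congr ?_ (fun i hi => rfl)
          ext i
          simp [Finset.mem_erase, Finset.mem_sdiff, and_comm]
      have hS : N = iv i₀ + ∑ i ∈ Finset.univ.erase i₀, iv i := by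
        rw [← hsum]
        exact (Finset.add_sum_erase _ _ (Finset.mem_univ _)).symm
      have m1 := IH (g + ∑ i ∈ Finset.univ.erase i₀, iv i) (by omega)
        (Function.update iv i₀ g) (hup g)
      have m2 := IH ((g+1) + ∑ i ∈ Finset.univ.erase i₀, iv i) (by omega)
        (Function.update iv i₀ (g+1)) (hup (g+1))
      have e0 : ∀ gg, (∏ i, Xv k n m i ^ (Function.update iv i₀ gg) i)
          = Xv k n m i₀ ^ gg * ∏ i ∈ Finset.univ.erase i₀, Xv k n m i ^ iv i := by
        intro gg
        rw [← Finset.mul_prod_erase Finset.univ _ (Finset.mem_univ i₀), Function.update_self]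
        congr 1
        exact Finset.prod_congr rfl fun i hi => by
          rw [Function.update_of_ne (Finset.ne_of_mem_erase hi)]
      have e1 : (∏ i, Xv k n m i ^ iv i)
          = Xv k n m i₀ ^ (g+2) * ∏ i ∈ Finset.univ.erase i₀, Xv k n m i ^ iv i := by
        rw [← Finset.mul_prod_erase Finset.univ _ (Finset.mem_univ i₀), hiv]
      have key : (∏ i, Xv k n m i ^ iv i) * Yv k n m j
          = (Xv k n m i₀ ^ 2 + Xv k n m i₀ * Zv k n m)
              * ((∏ i, Xv k n m i ^ (Function.update iv i₀ g) i) * Yv k n m j)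
            - Zv k n m * ((∏ i, Xv k n m i ^ (Function.update iv i₀ (g+1)) i) * Yv k n m j) := by
        rw [e0, e0, e1]; ring
      rw [key]
      refine sub_mem (mul_mem (Algebra.subset_adjoin ?_) m1)
        (mul_mem (Algebra.subset_adjoin ?_) m2)
      · exact Or.inl (Or.inl (Or.inr ⟨i₀, rfl⟩))
      · exact Or.inl (Or.inl (Or.inl (Or.inr rfl)))

lemma adjoin_MonoSet_le_Anm : Algebra.adjoin k (MonoSet k n m) ≤ Anm k n m := by
  classical
  apply Algebra.adjoin_le
  rintro p ⟨iv, jv, hpos, rfl⟩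
  obtain ⟨j₀, hj₀⟩ : ∃ j, jv j ≠ 0 := by
    by_contra hy
    push_neg at hy
    have : ∑ j, jv j = 0 := Finset.sum_eq_zero (fun j _ => hy j)
    omega
  have hsplit : (∏ j, Yv k n m j ^ jv j)
      = Yv k n m j₀ * ∏ j, Yv k n m j ^ (Function.update jv j₀ (jv j₀ - 1)) j := by
    have e0 : (∏ j, Yv k n m j ^ (Function.update jv j₀ (jv j₀ - 1)) j)
        = Yv k n m j₀ ^ (jv j₀ - 1) * ∏ j ∈ Finset.univ.erase j₀, Yv k n m j ^ jv j := by
      rw [← Finset.mul_prod_erase Finset.univ _ (Finset.mem_univ j₀), Function.update_self]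
      congr 1
      exact Finset.prod_congr rfl fun j hj => by
        rw [Function.update_of_ne (Finset.ne_of_mem_erase hj)]
    have e1 : (∏ j, Yv k n m j ^ jv j)
        = Yv k n m j₀ ^ (jv j₀) * ∏ j ∈ Finset.univ.erase j₀, Yv k n m j ^ jv j := by
      rw [← Finset.mul_prod_erase Finset.univ _ (Finset.mem_univ j₀)]
    rw [e0, e1, ← mul_assoc, ← pow_succ']
    congr 2
    omega
  have key : (∏ i, Xv k n m i ^ iv i) * ∏ j, Yv k n m j ^ jv j
      = ((∏ i, Xv k n m i ^ iv i) * Yv k n m j₀)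
          * ∏ j, Yv k n m j ^ (Function.update jv j₀ (jv j₀ - 1)) j := by
    rw [hsplit]; ring
  rw [key]
  refine Subalgebra.mul_mem _ (xpow_mul_y_mem k n m j₀ _ iv rfl)
    (Subalgebra.prod_mem _ (fun j _ => ?_))
  exact Subalgebra.pow_mem _ (mem_Anm_of_gen k n m (Or.inl (Or.inl (Or.inl (Or.inl ⟨j, rfl⟩))))) _


lemma phiGa_X (hm : 0 < m) (t : k) (i : Fin n) :
    phiGa k n m hm t (Xv k n m i) = Xv k n m i := by
  simp [phiGa, Xv]

lemma phiGa_Y (hm : 0 < m) (t : k) (j : Fin m) :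
    phiGa k n m hm t (Yv k n m j) = Yv k n m j := by
  simp [phiGa, Yv]

lemma phiGa_fix (hm : 0 < m) (t : k) {p : MvPolynomial (BonnetVars n m) k}
    (hp : p ∈ Algebra.adjoin k (MonoSet k n m)) : phiGa k n m hm t p = p := by
  induction hp using Algebra.adjoin_induction with
  | mem x hx =>
    obtain ⟨iv, jv, hpos, rfl⟩ := hx
    rw [map_mul, map_prod, map_prod]
    congr 1
    · exact Finset.prod_congr rfl fun i _ => by rw [map_pow, phiGa_X]
    · exact Finset.prod_congr rfl fun j _ => by rw [map_pow, phiGa_Y]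
  | algebraMap r => exact AlgHom.commutes _ r
  | add x y _ _ hx hy => rw [map_add, hx, hy]
  | mul x y _ _ hx hy => rw [map_mul, hx, hy]

lemma eval_aeval' (v : BonnetVars n m → k) (g : BonnetVars n m → MvPolynomial (BonnetVars n m) k)
    (q : MvPolynomial (BonnetVars n m) k) :
    eval v (aeval g q) = eval (fun w => eval v (g w)) q := by
  induction q using MvPolynomial.induction_on with
  | C a => simp
  | add p q hp hq => simp only [map_add, hp, hq]
  | mul_X p i hp => simp only [map_mul, hp, aeval_X, eval_X]

lemma eval_aeval'' (v f : BonnetVars n m → k)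
    (g : BonnetVars n m → MvPolynomial (BonnetVars n m) k)
    (hf : ∀ w, eval v (g w) = f w) (q : MvPolynomial (BonnetVars n m) k) :
    eval v (aeval g q) = eval f q := by
  rw [eval_aeval']
  exact congrArg (fun f => eval f q) (funext hf)

lemma zfree_of_invariant (hm : 0 < m) [CharZero k] {p : MvPolynomial (BonnetVars n m) k}
    (hp : ∀ t : k, phiGa k n m hm t p = p) :
    ∀ d ∈ p.support, d (bWZ n m) = 0 := by
  classical
  set g0 : BonnetVars n m → MvPolynomial (BonnetVars n m) k :=
    fun w => match w with
      | Sum.inl i => X (Sum.inl i)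
      | Sum.inr (Sum.inl j) => X (Sum.inr (Sum.inl j))
      | Sum.inr (Sum.inr _) => 0 with hg0
  have key : p = aeval g0 p := by
    have hmul : (X (Sum.inr (Sum.inl ⟨0, hm⟩)) : MvPolynomial (BonnetVars n m) k)
        * (p - aeval g0 p) = 0 := by
      apply MvPolynomial.funext
      intro v
      rw [map_mul, map_sub, map_zero, eval_X]
      by_cases hv : v (Sum.inr (Sum.inl ⟨0, hm⟩)) = 0
      · rw [hv, zero_mul]
      · set v' : BonnetVars n m → k := fun w => match w with
          | Sum.inl i => v (Sum.inl i)
          | Sum.inr (Sum.inl j) => v (Sum.inr (Sum.inl j))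
          | Sum.inr (Sum.inr _) => 0 with hv'
        have h1 : eval v (aeval g0 p) = eval v' p := by
          refine eval_aeval'' k n m v v' g0 (fun w => ?_) p
          rcases w with i | j | u
          · simp [g0, v']
          · simp [g0, v']
          · simp [g0, v']
        set t : k := - v (Sum.inr (Sum.inr ())) / v (Sum.inr (Sum.inl ⟨0, hm⟩)) with ht
        have h2 : eval v p = eval v' p := by
          conv_lhs => rw [← hp t]
          refine eval_aeval'' k n m v v' _ (fun w => ?_) p
          rcases w with i | j | u
          · simp [Xv, v']
          · simp [Yv, v']
          · show eval v (Zv k n m + C t * Yv k n m ⟨0, hm⟩) = 0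
            rw [map_add, map_mul, eval_C]
            simp only [Zv, Yv, eval_X, ht]
            field_simp
            ring
        rw [h1, ← h2, sub_self, mul_zero]
    have hX : (X (Sum.inr (Sum.inl ⟨0, hm⟩)) : MvPolynomial (BonnetVars n m) k) ≠ 0 :=
      X_ne_zero _
    have := mul_eq_zero.1 hmul
    rcases this with h | h
    · exact absurd h hX
    · exact sub_eq_zero.1 h
  have hmem : aeval g0 p ∈ suppSub k n m (fun d => d (bWZ n m) = 0) (by simp)
      (fun a b ha hb => by simp [Finsupp.add_apply, ha, hb]) := by
    have hrange : aeval g0 p ∈ (aeval g0).range := ⟨p, rfl⟩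
    rw [← Algebra.adjoin_range_eq_range_aeval] at hrange
    refine Algebra.adjoin_le ?_ hrange
    rintro q ⟨w, rfl⟩
    intro d hd
    rcases w with i | j | u
    · rw [show g0 (Sum.inl i) = X (Sum.inl i) from rfl, support_X, Finset.mem_singleton] at hd
      subst hd
      simp [Finsupp.single_apply]
    · rw [show g0 (Sum.inr (Sum.inl j)) = X (Sum.inr (Sum.inl j)) from rfl, support_X,
        Finset.mem_singleton] at hd
      subst hd
      simp [Finsupp.single_apply]
    · rw [show g0 (Sum.inr (Sum.inr u)) = 0 from rfl] at hd
      simp at hd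
  intro d hd
  rw [key] at hd
  exact hmem d hd


noncomputable def PhiH (i₀ : Fin n) :
    MvPolynomial (BonnetVars n m) k →ₐ[k] MvPolynomial (BonnetVars n m) k :=
  aeval (fun w => match w with
    | Sum.inl i => X (Sum.inl i)
    | Sum.inr (Sum.inl _) => 0
    | Sum.inr (Sum.inr _) => X (Sum.inr (Sum.inr ())) - X (Sum.inl i₀))

noncomputable def sigmaP (i₀ : Fin n) (r : Fin n → ℕ) (a b c : ℕ) :
    MvPolynomial (BonnetVars n m) k :=
  (X (Sum.inr (Sum.inr ())) - X (Sum.inl i₀)) ^ a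
    * monomial (Dfin n m (Sum.elim (Function.update r i₀ (b + 2*c))
        (Sum.elim 0 fun _ => b + c))) 1

def GsetP (i₀ : Fin n) : Set (MvPolynomial (BonnetVars n m) k) :=
  {q | ∃ r a b c, q = sigmaP k n m i₀ r a b c}

lemma Dfin_add (u u' : BonnetVars n m → ℕ) :
    Dfin n m u + Dfin n m u' = Dfin n m (fun w => u w + u' w) := by
  ext w; simp

lemma sigmaP_mul (i₀ : Fin n) (r r' : Fin n → ℕ) (a a' b b' c c' : ℕ) :
    sigmaP k n m i₀ r a b c * sigmaP k n m i₀ r' a' b' c'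
      = sigmaP k n m i₀ (r + r') (a + a') (b + b') (c + c') := by
  classical
  unfold sigmaP
  rw [mul_mul_mul_comm, ← pow_add, monomial_mul, mul_one, Dfin_add]
  have hD : (fun w : BonnetVars n m => Sum.elim (Function.update r i₀ (b + 2*c)) (Sum.elim 0 fun _ => b + c) w
        + Sum.elim (Function.update r' i₀ (b' + 2*c')) (Sum.elim 0 fun _ => b' + c') w)
      = Sum.elim (Function.update (r + r') i₀ ((b+b') + 2*(c+c')))
          (Sum.elim 0 fun _ => (b+b') + (c+c')) := by
    funext w
    rcases w with i | j | u
    · by_cases hi : i = i₀ <;> simp [Function.update_apply, hi, Pi.add_apply] <;> omega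
    · simp
    · simp; omega
  rw [hD]

lemma sigmaP_one (i₀ : Fin n) : sigmaP k n m i₀ 0 0 0 0 = 1 := by
  classical
  unfold sigmaP
  rw [pow_zero, one_mul]
  have h : Dfin n m (Sum.elim (Function.update (0 : Fin n → ℕ) i₀ (0 + 2*0))
      (Sum.elim 0 fun _ => 0 + 0)) = 0 := by
    ext w
    rcases w with i | j | u <;> simp [Function.update_apply]
  rw [h, monomial_zero', C_1]

noncomputable def Msub (i₀ : Fin n) : Subalgebra k (MvPolynomial (BonnetVars n m) k) where
  carrier := Submodule.span k (GsetP k n m i₀)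
  mul_mem' := by
    intro p q hp hq
    have h := Submodule.mul_mem_mul hp hq
    rw [Submodule.span_mul_span] at h
    refine Submodule.span_le.2 ?_ h
    rintro x hx
    rw [Set.mem_mul] at hx
    obtain ⟨y, hy, z, hz, rfl⟩ := hx
    obtain ⟨r, a, b, c, rfl⟩ := hy
    obtain ⟨r', a', b', c', rfl⟩ := hz
    rw [sigmaP_mul]
    exact Submodule.subset_span ⟨_, _, _, _, rfl⟩
  add_mem' := by intro p q hp hq; exact Submodule.add_mem _ hp hq
  one_mem' := Submodule.subset_span ⟨0, 0, 0, 0, (sigmaP_one k n m _).symm⟩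
  zero_mem' := Submodule.zero_mem _
  algebraMap_mem' := by
    intro r
    rw [Algebra.algebraMap_eq_smul_one]
    exact Submodule.smul_mem _ _ (Submodule.subset_span ⟨0, 0, 0, 0, (sigmaP_one k n m _).symm⟩)

lemma single_pow_prod (i₀ : Fin n) (e : ℕ) :
    (∏ i, Xv k n m i ^ (if i = i₀ then e else 0)) = Xv k n m i₀ ^ e := by
  rw [Finset.prod_eq_single i₀ (fun i _ hi => by rw [if_neg hi, pow_zero])
    (fun h => absurd (Finset.mem_univ i₀) h), if_pos rfl]

lemma sigmaP_explicit (i₀ : Fin n) (r : Fin n → ℕ) (a b c : ℕ) :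
    sigmaP k n m i₀ r a b c
      = (Zv k n m - Xv k n m i₀) ^ a
          * ((∏ i, Xv k n m i ^ (Function.update r i₀ (b + 2*c)) i) * Zv k n m ^ (b + c)) := by
  unfold sigmaP
  rw [monomial_Dfin]
  simp [Xv, Zv, mul_assoc]

lemma PhiH_X (i₀ i : Fin n) : PhiH k n m i₀ (Xv k n m i) = Xv k n m i := by
  simp [PhiH, Xv]

lemma PhiH_Y (i₀ : Fin n) (j : Fin m) : PhiH k n m i₀ (Yv k n m j) = 0 := by
  simp [PhiH, Yv]

lemma PhiH_Z (i₀ : Fin n) : PhiH k n m i₀ (Zv k n m) = Zv k n m - Xv k n m i₀ := by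
  simp [PhiH, Zv, Xv]

lemma mem_Msub {i₀ : Fin n} {q : MvPolynomial (BonnetVars n m) k} :
    q ∈ Msub k n m i₀ ↔ q ∈ Submodule.span k (GsetP k n m i₀) := Iff.rfl

lemma prod_update_zero (i₀ : Fin n) (e : ℕ) :
    (∏ i, Xv k n m i ^ (Function.update (0 : Fin n → ℕ) i₀ e) i) = Xv k n m i₀ ^ e := by
  rw [Finset.prod_congr rfl (fun i _ => by rw [Function.update_apply])]
  exact single_pow_prod k n m i₀ e

lemma sigmaP_diag (i₀ : Fin n) (b c : ℕ) :
    sigmaP k n m i₀ 0 0 b c = Xv k n m i₀ ^ (b + 2*c) * Zv k n m ^ (b + c) := by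
  rw [sigmaP_explicit, pow_zero, one_mul, prod_update_zero]

lemma sigmaP_z (i₀ : Fin n) : sigmaP k n m i₀ 0 1 0 0 = Zv k n m - Xv k n m i₀ := by
  rw [sigmaP_explicit, prod_update_zero]
  simp

lemma sigmaP_off (i₀ i : Fin n) (hi : i ≠ i₀) (e a : ℕ) :
    sigmaP k n m i₀ (fun i' => if i' = i then e else 0) a 0 0
      = (Zv k n m - Xv k n m i₀) ^ a * Xv k n m i ^ e := by
  rw [sigmaP_explicit]
  have h1 : Function.update (fun i' => if i' = i then e else 0) i₀ (0 + 2*0)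
      = fun i' => if i' = i then e else 0 := by
    funext j'
    by_cases h : j' = i₀
    · subst h; simp [Function.update_apply, Ne.symm hi]
    · simp [Function.update_apply, h]
  rw [h1, single_pow_prod]
  simp

lemma PhiH_mem_Msub (i₀ : Fin n) {p : MvPolynomial (BonnetVars n m) k} (hp : p ∈ Anm k n m) :
    PhiH k n m i₀ p ∈ Msub k n m i₀ := by
  classical
  have h1 : Subalgebra.map (PhiH k n m i₀) (Anm k n m) ≤ Msub k n m i₀ := by
    rw [Anm, AlgHom.map_adjoin]
    apply Algebra.adjoin_le
    rintro q ⟨g, hg, rfl⟩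
    rcases hg with (((⟨j, rfl⟩ | hg) | ⟨i, rfl⟩) | ⟨i, rfl⟩) | ⟨s, j, rfl⟩
    · rw [PhiH_Y]
      exact Subalgebra.zero_mem _
    · rw [Set.mem_singleton_iff] at hg
      subst hg
      rw [PhiH_Z]
      rw [show Zv k n m - Xv k n m i₀ = sigmaP k n m i₀ 0 1 0 0 from (sigmaP_z k n m i₀).symm]
      exact Submodule.subset_span ⟨_, _, _, _, rfl⟩
    · rw [map_add, map_mul, map_pow, PhiH_X, PhiH_Z]
      rcases eq_or_ne i i₀ with rfl | hi
      · have he : Xv k n m i ^ 2 + Xv k n m i * (Zv k n m - Xv k n m i)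
            = sigmaP k n m i 0 0 1 0 := by
          rw [sigmaP_diag]; ring_nf
        rw [he]
        exact Submodule.subset_span ⟨_, _, _, _, rfl⟩
      · have he : Xv k n m i ^ 2 + Xv k n m i * (Zv k n m - Xv k n m i₀)
            = sigmaP k n m i₀ (fun i' => if i' = i then 2 else 0) 0 0 0
              + sigmaP k n m i₀ (fun i' => if i' = i then 1 else 0) 1 0 0 := by
          rw [sigmaP_off k n m i₀ i hi, sigmaP_off k n m i₀ i hi]; ring
        rw [he]
        exact Subalgebra.add_mem _ (Submodule.subset_span ⟨_, _, _, _, rfl⟩)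
          (Submodule.subset_span ⟨_, _, _, _, rfl⟩)
    · rw [map_add, map_mul, map_pow, map_pow, PhiH_X, PhiH_Z]
      rcases eq_or_ne i i₀ with rfl | hi
      · have he : Xv k n m i ^ 3 + Xv k n m i ^ 2 * (Zv k n m - Xv k n m i)
            = sigmaP k n m i 0 0 0 1 := by
          rw [sigmaP_diag]; ring_nf
        rw [he]
        exact Submodule.subset_span ⟨_, _, _, _, rfl⟩
      · have he : Xv k n m i ^ 3 + Xv k n m i ^ 2 * (Zv k n m - Xv k n m i₀)
            = sigmaP k n m i₀ (fun i' => if i' = i then 3 else 0) 0 0 0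
              + sigmaP k n m i₀ (fun i' => if i' = i then 2 else 0) 1 0 0 := by
          rw [sigmaP_off k n m i₀ i hi, sigmaP_off k n m i₀ i hi]; ring
        rw [he]
        exact Subalgebra.add_mem _ (Submodule.subset_span ⟨_, _, _, _, rfl⟩)
          (Submodule.subset_span ⟨_, _, _, _, rfl⟩)
    · rw [map_mul, PhiH_Y, mul_zero]
      exact Subalgebra.zero_mem _
  exact h1 ⟨p, hp, rfl⟩


lemma sub_pow_expand (i₀ : Fin n) (a : ℕ) :
    ((X (Sum.inr (Sum.inr ())) - X (Sum.inl i₀) : MvPolynomial (BonnetVars n m) k)) ^ a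
      = ∑ s ∈ Finset.range (a+1),
          monomial (Finsupp.single (bWZ n m) s + Finsupp.single (Sum.inl i₀) (a - s))
            ((-1 : k) ^ (a - s) * (a.choose s : k)) := by
  rw [sub_eq_add_neg, add_pow]
  refine Finset.sum_congr rfl fun s hs => ?_
  rw [neg_pow, X_pow_eq_monomial, X_pow_eq_monomial]
  have hsgn : ((-1 : MvPolynomial (BonnetVars n m) k)) ^ (a-s) = C ((-1 : k) ^ (a-s)) := by
    rw [← C_1, ← map_neg, ← map_pow]
  have hc : ((a.choose s : ℕ) : MvPolynomial (BonnetVars n m) k) = C ((a.choose s : ℕ) : k) := by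
    rw [MvPolynomial.C_eq_coe_nat]
  rw [hsgn, hc]
  simp only [C_apply, monomial_mul, add_zero, zero_add, one_mul, mul_one]


lemma coeff_sub_pow (i₀ : Fin n) (a : ℕ) (e : BonnetVars n m →₀ ℕ) :
    coeff e ((X (Sum.inr (Sum.inr ())) - X (Sum.inl i₀) : MvPolynomial (BonnetVars n m) k) ^ a) =
      if e = Finsupp.single (bWZ n m) (e (bWZ n m)) + Finsupp.single (Sum.inl i₀) (e (Sum.inl i₀))
          ∧ e (bWZ n m) + e (Sum.inl i₀) = a
      then (-1 : k) ^ (e (Sum.inl i₀)) * (a.choose (e (bWZ n m)) : k) else 0 := by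
  classical
  rw [sub_pow_expand, coeff_sum]
  simp only [coeff_monomial]
  by_cases h : e = Finsupp.single (bWZ n m) (e (bWZ n m)) + Finsupp.single (Sum.inl i₀) (e (Sum.inl i₀))
      ∧ e (bWZ n m) + e (Sum.inl i₀) = a
  · rw [if_pos h]
    obtain ⟨he, hs⟩ := h
    rw [Finset.sum_eq_single (e (bWZ n m))]
    · rw [if_pos]
      · congr 2
        omega
      · have h3 : a - e (bWZ n m) = e (Sum.inl i₀) := by omega
        rw [h3]
        exact he.symm
    · intro s hs' hne
      rw [if_neg]
      intro hcontra
      have h1 : e (bWZ n m) = s := by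
        have := congrArg (fun f : BonnetVars n m →₀ ℕ => f (bWZ n m)) hcontra
        simpa [Finsupp.single_apply] using this.symm
      exact hne h1.symm
    · intro hcontra
      exact absurd (Finset.mem_range.2 (by omega)) hcontra
  · rw [if_neg h]
    refine Finset.sum_eq_zero (fun s hs => ?_)
    rw [if_neg]
    intro hcontra
    apply h
    have h1 : e (bWZ n m) = s := by
      have := congrArg (fun f : BonnetVars n m →₀ ℕ => f (bWZ n m)) hcontra
      simpa [Finsupp.single_apply] using this.symm
    have h2 : e (Sum.inl i₀) = a - s := by
      have := congrArg (fun f : BonnetVars n m →₀ ℕ => f (Sum.inl i₀)) hcontra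
      simpa [Finsupp.single_apply] using this.symm
    rw [Finset.mem_range] at hs
    exact ⟨by rw [h1, h2, ← hcontra], by omega⟩


lemma coeff_key (i₀ : Fin n) (d : BonnetVars n m →₀ ℕ)
    (hdz : d (bWZ n m) = 0) (hdy : ∀ j, d (bWY n m j) = 0) :
    ∀ q ∈ Submodule.span k (GsetP k n m i₀),
      coeff d q = (-1 : k) ^ (d (Sum.inl i₀))
        * coeff (Finsupp.single (bWZ n m) (d (Sum.inl i₀)) + Finsupp.erase (Sum.inl i₀) d) q := by
  classical
  set f₀ := d (Sum.inl i₀) with hf₀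
  set d' : BonnetVars n m →₀ ℕ :=
    Finsupp.single (bWZ n m) f₀ + Finsupp.erase (Sum.inl i₀) d with hd'
  have hd'x0 : d' (Sum.inl i₀) = 0 := by
    simp [hd', Finsupp.single_apply, Finsupp.erase_apply]
  have hd'z : d' (bWZ n m) = f₀ := by
    simp [hd', Finsupp.single_apply, Finsupp.erase_apply, hdz]
  have hd'x : ∀ i, i ≠ i₀ → d' (Sum.inl i) = d (Sum.inl i) := by
    intro i hi
    simp [hd', Finsupp.single_apply, Finsupp.erase_apply, hi]
  intro q hq
  induction hq using Submodule.span_induction with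
  | zero => simp
  | add x y hx hy ihx ihy => rw [coeff_add, coeff_add, ihx, ihy]; ring
  | smul t x hx ih => rw [coeff_smul, coeff_smul, ih, smul_eq_mul, smul_eq_mul]; ring
  | mem x hx =>
    obtain ⟨r, a, b, c, rfl⟩ := hx
    set D₀ := Dfin n m (Sum.elim (Function.update r i₀ (b + 2*c))
      (Sum.elim 0 fun _ => b + c)) with hD₀
    have hD₀x0 : D₀ (Sum.inl i₀) = b + 2*c := by rw [hD₀, Dfin_apply, Sum.elim_inl, Function.update_self]
    have hD₀z : D₀ (bWZ n m) = b + c := by rw [hD₀]; rfl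
    have hD₀x : ∀ i, i ≠ i₀ → D₀ (Sum.inl i) = r i := by
      intro i hi; rw [hD₀, Dfin_apply, Sum.elim_inl, Function.update_of_ne hi]
    have hD₀y : ∀ j, D₀ (bWY n m j) = 0 := by intro j; rw [hD₀]; rfl
    rw [show sigmaP k n m i₀ r a b c
      = (X (Sum.inr (Sum.inr ())) - X (Sum.inl i₀)) ^ a * monomial D₀ 1 from rfl]
    rw [coeff_mul_monomial', coeff_mul_monomial']
    by_cases hbc : b = 0 ∧ c = 0
    · obtain ⟨rfl, rfl⟩ := hbc
      by_cases hQ : ∀ i, i ≠ i₀ → r i ≤ d (Sum.inl i)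
      · have hled : D₀ ≤ d := by
          rw [Finsupp.le_def]
          intro w
          rcases w with i | j | ⟨⟩
          · by_cases hi : i = i₀
            · subst hi; rw [hD₀x0]; omega
            · rw [hD₀x i hi]; exact hQ i hi
          · rw [hD₀y j]; omega
          · rw [show (Sum.inr (Sum.inr ()) : BonnetVars n m) = bWZ n m from rfl, hD₀z]; omega
        have hled' : D₀ ≤ d' := by
          rw [Finsupp.le_def]
          intro w
          rcases w with i | j | ⟨⟩
          · by_cases hi : i = i₀
            · subst hi; rw [hD₀x0]; omega
            · rw [hD₀x i hi, hd'x i hi]; exact hQ i hi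
          · rw [hD₀y j]; omega
          · rw [show (Sum.inr (Sum.inr ()) : BonnetVars n m) = bWZ n m from rfl, hD₀z]; omega
        rw [if_pos hled, if_pos hled', mul_one, mul_one, coeff_sub_pow, coeff_sub_pow]
        have he₁z : (d - D₀) (bWZ n m) = 0 := by
          rw [Finsupp.tsub_apply, hD₀z, hdz]
        have he₁x0 : (d - D₀) (Sum.inl i₀) = f₀ := by
          rw [Finsupp.tsub_apply, hD₀x0, ← hf₀]; omega
        have he₂z : (d' - D₀) (bWZ n m) = f₀ := by
          rw [Finsupp.tsub_apply, hD₀z, hd'z]; omega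
        have he₂x0 : (d' - D₀) (Sum.inl i₀) = 0 := by
          rw [Finsupp.tsub_apply, hD₀x0, hd'x0]
        rw [he₁z, he₁x0, he₂z, he₂x0]
        have hcond₁ : ((d - D₀) = Finsupp.single (bWZ n m) 0 + Finsupp.single (Sum.inl i₀) f₀)
            ↔ (∀ i, i ≠ i₀ → d (Sum.inl i) = r i) := by
          constructor
          · intro h i hi
            have h2 := congrArg (fun f : BonnetVars n m →₀ ℕ => f (Sum.inl i)) h
            simp only [Finsupp.tsub_apply, Finsupp.add_apply, Finsupp.single_apply] at h2
            rw [hD₀x i hi] at h2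
            have hne1 : ¬ (bWZ n m = Sum.inl i) := by simp
            have hne2 : ¬ ((Sum.inl i₀ : BonnetVars n m) = Sum.inl i) := by simp [Ne.symm hi]
            rw [if_neg hne1, if_neg hne2] at h2
            have := hQ i hi
            omega
          · intro hR
            ext w
            rcases w with i | j | ⟨⟩
            · by_cases hi : i = i₀
              · subst hi
                rw [Finsupp.tsub_apply, hD₀x0, ← hf₀]
                simp [Finsupp.single_apply]
              · rw [Finsupp.tsub_apply, hD₀x i hi, hR i hi]
                simp [Finsupp.single_apply, Ne.symm hi]
            · rw [Finsupp.tsub_apply, hD₀y j, hdy j]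
              simp [Finsupp.single_apply]
            · rw [show (Sum.inr (Sum.inr ()) : BonnetVars n m) = bWZ n m from rfl,
                Finsupp.tsub_apply, hD₀z, hdz]
              simp [Finsupp.single_apply]
        have hcond₂ : ((d' - D₀) = Finsupp.single (bWZ n m) f₀ + Finsupp.single (Sum.inl i₀) 0)
            ↔ (∀ i, i ≠ i₀ → d (Sum.inl i) = r i) := by
          constructor
          · intro h i hi
            have h2 := congrArg (fun f : BonnetVars n m →₀ ℕ => f (Sum.inl i)) h
            simp only [Finsupp.tsub_apply, Finsupp.add_apply, Finsupp.single_apply] at h2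
            rw [hD₀x i hi, hd'x i hi] at h2
            have hne1 : ¬ (bWZ n m = Sum.inl i) := by simp
            have hne2 : ¬ ((Sum.inl i₀ : BonnetVars n m) = Sum.inl i) := by simp [Ne.symm hi]
            rw [if_neg hne1, if_neg hne2] at h2
            have := hQ i hi
            omega
          · intro hR
            ext w
            rcases w with i | j | ⟨⟩
            · by_cases hi : i = i₀
              · subst hi
                rw [Finsupp.tsub_apply, hD₀x0, hd'x0]
                simp [Finsupp.single_apply]
              · rw [Finsupp.tsub_apply, hD₀x i hi, hd'x i hi, hR i hi]
                simp [Finsupp.single_apply, Ne.symm hi]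
            · have hd'y : d' (bWY n m j) = 0 := by
                simp [hd', Finsupp.single_apply, Finsupp.erase_apply, hdy j]
              rw [Finsupp.tsub_apply, hD₀y j, hd'y]
              simp [Finsupp.single_apply]
            · rw [show (Sum.inr (Sum.inr ()) : BonnetVars n m) = bWZ n m from rfl,
                Finsupp.tsub_apply, hD₀z, hd'z]
              simp [Finsupp.single_apply]
        by_cases hC : (∀ i, i ≠ i₀ → d (Sum.inl i) = r i) ∧ f₀ = a
        · obtain ⟨hR, ha⟩ := hC
          subst ha
          rw [if_pos ⟨hcond₁.2 hR, by omega⟩, if_pos ⟨hcond₂.2 hR, by omega⟩]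
          simp [Nat.choose_self]
        · have h1 : ¬ (((d - D₀) = Finsupp.single (bWZ n m) 0 + Finsupp.single (Sum.inl i₀) f₀)
              ∧ 0 + f₀ = a) := by
            rintro ⟨hc1, hsum⟩
            exact hC ⟨hcond₁.1 hc1, by omega⟩
          have h2 : ¬ (((d' - D₀) = Finsupp.single (bWZ n m) f₀ + Finsupp.single (Sum.inl i₀) 0)
              ∧ f₀ + 0 = a) := by
            rintro ⟨hc2, hsum⟩
            exact hC ⟨hcond₂.1 hc2, by omega⟩
          rw [if_neg h1, if_neg h2, mul_zero]
      · push_neg at hQ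
        obtain ⟨i, hi, hlt⟩ := hQ
        have hn1 : ¬ D₀ ≤ d := by
          intro hle
          have := Finsupp.le_def.1 hle (Sum.inl i)
          rw [hD₀x i hi] at this
          omega
        have hn2 : ¬ D₀ ≤ d' := by
          intro hle
          have := Finsupp.le_def.1 hle (Sum.inl i)
          rw [hD₀x i hi, hd'x i hi] at this
          omega
        rw [if_neg hn1, if_neg hn2, mul_zero]
    · have hn1 : ¬ D₀ ≤ d := by
        intro hle
        have := Finsupp.le_def.1 hle (bWZ n m)
        rw [hD₀z, hdz] at this
        omega
      have hn2 : ¬ D₀ ≤ d' := by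
        intro hle
        have := Finsupp.le_def.1 hle (Sum.inl i₀)
        rw [hD₀x0, hd'x0] at this
        omega
      rw [if_neg hn1, if_neg hn2, mul_zero]


lemma no_pure_x {p : MvPolynomial (BonnetVars n m) k} (hp : p ∈ Anm k n m)
    (hz : ∀ e ∈ p.support, e (bWZ n m) = 0) (d : BonnetVars n m →₀ ℕ)
    (hdy : ∀ j, d (bWY n m j) = 0) (hdz : d (bWZ n m) = 0)
    (i₀ : Fin n) (hi₀ : d (Sum.inl i₀) ≠ 0) : coeff d p = 0 := by
  classical
  set q := PhiH k n m i₀ p with hq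
  have hqform : q = ∑ e ∈ p.support,
      if (∀ j, e (bWY n m j) = 0) then monomial e (coeff e p) else 0 := by
    rw [hq]
    conv_lhs => rw [← support_sum_monomial_coeff p]
    rw [map_sum]
    refine Finset.sum_congr rfl (fun e he => ?_)
    rw [PhiH, aeval_monomial]
    by_cases hy : ∀ j, e (bWY n m j) = 0
    · rw [if_pos hy]
      have hprod : (Finsupp.prod e fun w k' =>
          (match w with
            | Sum.inl i => X (Sum.inl i)
            | Sum.inr (Sum.inl _) => 0
            | Sum.inr (Sum.inr _) => X (Sum.inr (Sum.inr ())) - X (Sum.inl i₀)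
            : MvPolynomial (BonnetVars n m) k) ^ k')
          = Finsupp.prod e fun w k' => X w ^ k' := by
        apply Finsupp.prod_congr
        intro w hw
        rcases w with i | j | ⟨⟩
        · rfl
        · exact absurd (Finsupp.mem_support_iff.1 hw) (by simpa using hy j)
        · exact absurd (Finsupp.mem_support_iff.1 hw) (by simpa using hz e he)
      rw [hprod, algebraMap_eq, ← monomial_eq]
    · rw [if_neg hy]
      push_neg at hy
      obtain ⟨j, hj⟩ := hy
      have hmem : (Sum.inr (Sum.inl j) : BonnetVars n m) ∈ e.support :=
        Finsupp.mem_support_iff.2 hj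
      rw [Finsupp.prod, Finset.prod_eq_zero hmem, mul_zero]
      exact zero_pow hj
  have h1 : coeff d q = coeff d p := by
    rw [hqform, coeff_sum]
    rw [Finset.sum_eq_single d]
    · rw [if_pos hdy, coeff_monomial, if_pos rfl]
    · intro e he hne
      by_cases hy : ∀ j, e (bWY n m j) = 0
      · rw [if_pos hy, coeff_monomial, if_neg hne]
      · rw [if_neg hy, coeff_zero]
    · intro hd
      rw [if_pos hdy, coeff_monomial, if_pos rfl]
      exact MvPolynomial.notMem_support_iff.1 hd
  have h2 : coeff (Finsupp.single (bWZ n m) (d (Sum.inl i₀)) + Finsupp.erase (Sum.inl i₀) d) q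
      = 0 := by
    rw [hqform, coeff_sum]
    refine Finset.sum_eq_zero (fun e he => ?_)
    by_cases hy : ∀ j, e (bWY n m j) = 0
    · rw [if_pos hy, coeff_monomial, if_neg]
      intro hcontra
      have h3 := congrArg (fun f : BonnetVars n m →₀ ℕ => f (bWZ n m)) hcontra
      simp only [Finsupp.add_apply, Finsupp.single_apply, Finsupp.erase_apply, if_pos rfl] at h3
      rw [hz e he] at h3
      simp at h3
      exact hi₀ (by omega)
    · rw [if_neg hy, coeff_zero]
  have h3 := coeff_key k n m i₀ d hdz hdy q (PhiH_mem_Msub k n m i₀ hp)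
  rw [← h1, h3, h2, mul_zero]


noncomputable def Wsub (dN : BonnetVars n m →₀ ℕ) (hy : ∑ j, dN (bWY n m j) = 1) :
    Subalgebra k (MvPolynomial (BonnetVars n m) k) where
  carrier := {p | (∀ e ∈ p.support, GoodExp n m e) ∧ coeff dN p = 0}
  mul_mem' := by
    classical
    intro p q hp hq
    constructor
    · intro e he
      obtain ⟨e₁, h₁, e₂, h₂, rfl⟩ := mem_of_support_mul k n m he
      exact GoodExp.add n m _ _ (hp.1 _ h₁) (hq.1 _ h₂)
    · rw [coeff_mul]
      refine Finset.sum_eq_zero (fun x hx => ?_)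
      rw [Finset.HasAntidiagonal.mem_antidiagonal] at hx
      by_cases hc1 : coeff x.1 p = 0
      · rw [hc1, zero_mul]
      by_cases hc2 : coeff x.2 q = 0
      · rw [hc2, mul_zero]
      have g1 := hp.1 x.1 (MvPolynomial.mem_support_iff.2 hc1)
      have g2 := hq.1 x.2 (MvPolynomial.mem_support_iff.2 hc2)
      rcases g1.2 with h01 | ⟨j1', hj1'⟩
      · have hx2 : x.2 = dN := by rw [← hx, h01, zero_add]
        rw [hx2] at hc2
        exact absurd hq.2 hc2
      rcases g2.2 with h02 | ⟨j2', hj2'⟩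
      · have hx1 : x.1 = dN := by rw [← hx, h02, add_zero]
        rw [hx1] at hc1
        exact absurd hp.2 hc1
      exfalso
      have s1 : 1 ≤ ∑ j, x.1 (bWY n m j) :=
        le_trans (Nat.one_le_iff_ne_zero.2 hj1')
          (Finset.single_le_sum (f := fun j => x.1 (bWY n m j))
            (fun _ _ => Nat.zero_le _) (Finset.mem_univ j1'))
      have s2 : 1 ≤ ∑ j, x.2 (bWY n m j) :=
        le_trans (Nat.one_le_iff_ne_zero.2 hj2')
          (Finset.single_le_sum (f := fun j => x.2 (bWY n m j))
            (fun _ _ => Nat.zero_le _) (Finset.mem_univ j2'))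
      have hsum : ∑ j, dN (bWY n m j)
          = ∑ j, x.1 (bWY n m j) + ∑ j, x.2 (bWY n m j) := by
        rw [← hx]
        simp [Finsupp.add_apply, Finset.sum_add_distrib]
      omega
  one_mem' := by
    classical
    constructor
    · intro e he
      rw [MvPolynomial.mem_support_iff, coeff_one] at he
      obtain rfl : (0 : BonnetVars n m →₀ ℕ) = e := by by_contra h; simp [h] at he
      exact GoodExp.zero n m
    · rw [coeff_one, if_neg]
      intro h
      rw [← h] at hy
      simp at hy
  add_mem' := by
    classical
    intro p q hp hq
    constructor
    · intro e he
      rcases Finset.mem_union.1 (MvPolynomial.support_add he) with h | h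
      exacts [hp.1 _ h, hq.1 _ h]
    · rw [coeff_add, hp.2, hq.2, add_zero]
  zero_mem' := by simp
  algebraMap_mem' := by
    classical
    intro r
    constructor
    · intro e he
      rw [MvPolynomial.mem_support_iff, algebraMap_eq, coeff_C] at he
      obtain rfl : (0 : BonnetVars n m →₀ ℕ) = e := by by_contra h; simp [h] at he
      exact GoodExp.zero n m
    · rw [algebraMap_eq, coeff_C, if_neg]
      intro h
      rw [← h] at hy
      simp at hy

end BonnetAux
/-- The ring of `G_a`-invariants of `A_{n,m}` is the `k`-algebra generated by the
monomials `x_1^{i_1}⋯x_n^{i_n} y_1^{j_1}⋯y_m^{j_m}` with `j_1 + ⋯ + j_m > 0`;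
in particular it is not a finitely generated `k`-algebra. -/
theorem Anm_Ga_invariants (hn : 0 < n) (hm : 0 < m) [CharZero k] :
    (∀ p : MvPolynomial (BonnetVars n m) k,
      (p ∈ Anm k n m ∧ ∀ t : k, phiGa k n m hm t p = p) ↔
        p ∈ Algebra.adjoin k (MonoSet k n m)) ∧
      ¬ (Algebra.adjoin k (MonoSet k n m)).FG := by
  classical
  constructor
  · intro p
    constructor
    · rintro ⟨hpA, hinv⟩
      apply mem_adjoin_of_good k n m
      intro d hd
      have hzf := zfree_of_invariant k n m hm hinv
      refine ⟨hzf d hd, ?_⟩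
      by_cases h0 : d = 0
      · exact Or.inl h0
      · refine Or.inr ?_
        by_contra hy
        push_neg at hy
        have hdy : ∀ j, d (bWY n m j) = 0 := fun j => by
          by_contra hne
          exact hne (by simpa using hy j)
        obtain ⟨w, hw⟩ : ∃ w, d w ≠ 0 := by
          by_contra hall
          push_neg at hall
          exact h0 (Finsupp.ext hall)
        rcases w with i | j | ⟨⟩
        · exact (MvPolynomial.mem_support_iff.1 hd)
            (no_pure_x k n m hpA hzf d hdy (hzf d hd) i hw)
        · exact hw (hdy j)
        · exact hw (hzf d hd)
    · intro hp
      exact ⟨adjoin_MonoSet_le_Anm k n m hp, fun t => phiGa_fix k n m hm t hp⟩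
  · rintro ⟨t, ht⟩
    set i₁ : Fin n := ⟨0, hn⟩ with hi₁
    set W1 : BonnetVars n m := Sum.inl i₁ with hW1
    set j₁ : Fin m := ⟨0, hm⟩ with hj₁
    set N : ℕ := 1 + t.sup (fun q => degreeOf W1 q) with hN
    set dN : BonnetVars n m →₀ ℕ :=
      Finsupp.single W1 N + Finsupp.single (bWY n m j₁) 1 with hdN
    have hdNy : ∑ j, dN (bWY n m j) = 1 := by
      have h1 : ∀ j, dN (bWY n m j) = if j₁ = j then 1 else 0 := by
        intro j
        simp [hdN, Finsupp.add_apply, Finsupp.single_apply, hW1]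
      rw [Finset.sum_congr rfl (fun j _ => h1 j)]
      simp
    have hdNW1 : dN W1 = N := by
      simp [hdN, Finsupp.add_apply, Finsupp.single_apply, hW1]
    -- every generator is in Wsub
    have hsub : Algebra.adjoin k (↑t : Set (MvPolynomial (BonnetVars n m) k))
        ≤ Wsub k n m dN hdNy := by
      apply Algebra.adjoin_le
      intro q hq
      have hqS : q ∈ Algebra.adjoin k (MonoSet k n m) := by
        rw [← ht]
        exact Algebra.subset_adjoin hq
      constructor
      · exact adjoin_MonoSet_le_Vsub k n m hqS
      · by_contra hne
        have hmem : dN ∈ q.support := MvPolynomial.mem_support_iff.2 hne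
        have hle : dN W1 ≤ degreeOf W1 q := by
          rw [degreeOf_eq_sup]
          exact Finset.le_sup (f := fun e : BonnetVars n m →₀ ℕ => e W1) hmem
        have hle2 : degreeOf W1 q ≤ t.sup (fun q => degreeOf W1 q) :=
          Finset.le_sup hq
        rw [hdNW1] at hle
        omega
    -- the monomial x1^N y1 is in the adjoin of MonoSet
    have hmono : (X W1 ^ N * X (bWY n m j₁) : MvPolynomial (BonnetVars n m) k)
        ∈ Algebra.adjoin k (MonoSet k n m) := by
      apply Algebra.subset_adjoin
      refine ⟨fun i => if i = i₁ then N else 0, fun j => if j = j₁ then 1 else 0, ?_, ?_⟩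
      · have h2 : ∑ j, (fun j => if j = j₁ then (1:ℕ) else 0) j = 1 := by simp
        omega
      · have hYprod : ∏ j, Yv k n m j ^ (if j = j₁ then (1:ℕ) else 0) = Yv k n m j₁ := by
          rw [Finset.prod_eq_single j₁ (fun j _ hj => by rw [if_neg hj, pow_zero])
            (fun h => absurd (Finset.mem_univ j₁) h), if_pos rfl, pow_one]
        show X W1 ^ N * X (bWY n m j₁)
          = (∏ i, Xv k n m i ^ (if i = i₁ then N else 0))
            * ∏ j, Yv k n m j ^ (if j = j₁ then (1:ℕ) else 0)
        rw [single_pow_prod, hYprod]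
        rfl
    rw [← ht] at hmono
    have hcoeff := (hsub hmono).2
    have hval : coeff dN (X W1 ^ N * X (bWY n m j₁) : MvPolynomial (BonnetVars n m) k)
        = 1 := by
      rw [show (X (bWY n m j₁) : MvPolynomial (BonnetVars n m) k)
          = X (bWY n m j₁) ^ 1 from (pow_one _).symm]
      rw [X_pow_eq_monomial, X_pow_eq_monomial, monomial_mul, one_mul, coeff_monomial,
        if_pos rfl]
    rw [hval] at hcoeff
    exact one_ne_zero hcoeff
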